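/- Let ν, ω be positive definite matrices on a finite dimensional Hilbert space. Then for every s ∈ [0,1], D(ν,ω) = (1/2)(Tr ω + Tr ν − Tr|ω−ν|) ≤ Tr(ν^s ω^{1−s}). -/

import Mathlib

open scoped ComplexOrder

/-- Functional calculus for Hermitian matrices (junk value `0` off the Hermitian matrices). -/
noncomputable def cfcM {d : ℕ} (f : ℝ → ℝ) (A : Matrix (Fin d) (Fin d) ℂ) :
    Matrix (Fin d) (Fin d) ℂ :=
  if h : A.IsHermitian then
    (h.eigenvectorUnitary : Matrix (Fin d) (Fin d) ℂ) *
      Matrix.diagonal (fun i => (f (h.eigenvalues i) : ℂ)) *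
      (star (h.eigenvectorUnitary : Matrix (Fin d) (Fin d) ℂ))
  else 0

/-- Real power of a (positive) Hermitian matrix via functional calculus. -/
noncomputable def mpow {d : ℕ} (A : Matrix (Fin d) (Fin d) ℂ) (s : ℝ) :
    Matrix (Fin d) (Fin d) ℂ := cfcM (fun x => x ^ s) A

/-- Absolute value of a Hermitian matrix via functional calculus. -/
noncomputable def matAbs {d : ℕ} (A : Matrix (Fin d) (Fin d) ℂ) :
    Matrix (Fin d) (Fin d) ℂ := cfcM (fun x => |x|) A


/-!
With `X = ω - ν`, the matrix `C = ν + X⁺ = ω + X⁻` dominates both `ν` and `ω`, and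
`tr ν + tr ω - tr C = tr ν - tr X⁻` is exactly the left-hand side. By operator monotonicity of
`t ↦ t ^ r` for `r ∈ [0, 1]` (Löwner–Heinz) the factors of
`tr ((C ^ s - ν ^ s) (C ^ (1 - s) - ω ^ (1 - s)))`, `tr (ν ^ s (C ^ (1 - s) - ν ^ (1 - s)))` and
`tr ((C ^ s - ω ^ s) ω ^ (1 - s))` are positive semidefinite, so all three traces are nonnegative;
their sum is `tr (ν ^ s ω ^ (1 - s)) - (tr ν + tr ω - tr C)`.
-/

open scoped MatrixOrder Matrix.Norms.L2Operator

namespace CFC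

variable {A : Type*} [PartialOrder A] [Ring A] [StarRing A] [TopologicalSpace A]
  [StarOrderedRing A] [Algebra ℝ A] [ContinuousFunctionalCalculus ℝ A IsSelfAdjoint]
  [NonnegSpectrumClass ℝ A]

lemma rpow_add_of_nonneg (a : A) {x y : ℝ} (hx : 0 ≤ x) (hy : 0 ≤ y) :
    a ^ (x + y) = a ^ x * a ^ y := by
  simp only [rpow_def]
  rw [← cfc_mul _ _ a (NNReal.continuous_rpow_const hx).continuousOn
    (NNReal.continuous_rpow_const hy).continuousOn]
  exact cfc_congr fun z _ => NNReal.rpow_add_of_nonneg z hx hy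

lemma rpow_mul_rpow_one_sub (a : A) {s : ℝ} (hs : s ∈ Set.Icc (0 : ℝ) 1)
    (ha : 0 ≤ a := by cfc_tac) : a ^ s * a ^ (1 - s) = a := by
  rw [← rpow_add_of_nonneg a hs.1 (sub_nonneg.mpr hs.2), add_sub_cancel, rpow_one a]

end CFC

namespace Matrix

variable {n : Type*} [Fintype n] [DecidableEq n]

lemma trace_mul_nonneg {𝕜 : Type*} [RCLike 𝕜] {A B : Matrix n n 𝕜} (hA : 0 ≤ A) (hB : 0 ≤ B) :
    0 ≤ (A * B).trace := by
  obtain ⟨S, hS, rfl⟩ : ∃ S : Matrix n n 𝕜, IsSelfAdjoint S ∧ B = S * S :=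
    ⟨CFC.sqrt B, (CFC.sqrt_nonneg B).isSelfAdjoint, (CFC.sqrt_mul_sqrt_self B hB).symm⟩
  rw [← mul_assoc, trace_mul_comm, ← mul_assoc]
  simpa [hS.isHermitian.eq] using
    ((nonneg_iff_posSemidef.mp hA).mul_mul_conjTranspose_same S).trace_nonneg

theorem trace_add_trace_sub_trace_le_trace_rpow_mul_rpow {A B C : Matrix n n ℂ}
    (hA : 0 ≤ A) (hB : 0 ≤ B) (hAC : A ≤ C) (hBC : B ≤ C) {s : ℝ} (hs : s ∈ Set.Icc (0 : ℝ) 1) :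
    A.trace + B.trace - C.trace ≤ (A ^ s * B ^ (1 - s)).trace := by
  have hs' : 1 - s ∈ Set.Icc (0 : ℝ) 1 := ⟨sub_nonneg.mpr hs.2, sub_le_self 1 hs.1⟩
  have hC : 0 ≤ C := hA.trans hAC
  have h₁ := trace_mul_nonneg (sub_nonneg.mpr (CFC.rpow_le_rpow hs hAC))
    (sub_nonneg.mpr (CFC.rpow_le_rpow hs' hBC))
  have h₂ := trace_mul_nonneg (CFC.rpow_nonneg (a := A) (y := s))
    (sub_nonneg.mpr (CFC.rpow_le_rpow hs' hAC))
  have h₃ := trace_mul_nonneg (sub_nonneg.mpr (CFC.rpow_le_rpow hs hBC))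
    (CFC.rpow_nonneg (a := B) (y := 1 - s))
  simp only [sub_mul, mul_sub, trace_sub, CFC.rpow_mul_rpow_one_sub _ hs hA,
    CFC.rpow_mul_rpow_one_sub _ hs hB, CFC.rpow_mul_rpow_one_sub _ hs hC] at h₁ h₂ h₃
  linear_combination h₁ + h₂ + h₃

end Matrix

lemma cfcM_eq_cfc {d : ℕ} {A : Matrix (Fin d) (Fin d) ℂ} (hA : A.IsHermitian) (f : ℝ → ℝ) :
    cfcM f A = cfc f A := by
  rw [hA.cfc_eq, Matrix.IsHermitian.cfc, cfcM, dif_pos hA, Unitary.conjStarAlgAut_apply]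
  rfl

lemma mpow_eq_rpow {d : ℕ} {A : Matrix (Fin d) (Fin d) ℂ} (hA : 0 ≤ A) (s : ℝ) :
    mpow A s = A ^ s := by
  rw [mpow, cfcM_eq_cfc (Matrix.nonneg_iff_posSemidef.mp hA).isHermitian, CFC.rpow_eq_cfc_real hA]

lemma matAbs_eq_abs {d : ℕ} {A : Matrix (Fin d) (Fin d) ℂ} (hA : A.IsHermitian) :
    matAbs A = CFC.abs A := by
  rw [matAbs, cfcM_eq_cfc hA, CFC.abs_eq_cfc_norm A hA.isSelfAdjoint]
  rfl

/-- Upper bound on the minimal error probability: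
`D(ν,ω) = (1/2)(Tr ω + Tr ν − Tr|ω−ν|) ≤ Tr(ν^s ω^{1−s})` for `s ∈ [0,1]`. -/
theorem minimal_error_le_renyi {d : ℕ}
    (ν ω : Matrix (Fin d) (Fin d) ℂ) (hν : ν.PosDef) (hω : ω.PosDef)
    (s : ℝ) (hs : s ∈ Set.Icc (0 : ℝ) 1) :
    (1 / 2 : ℝ) * ((ω.trace).re + (ν.trace).re - ((matAbs (ω - ν)).trace).re)
      ≤ ((mpow ν s * mpow ω (1 - s)).trace).re := by
  have hν₀ : 0 ≤ ν := hν.posSemidef.nonneg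
  have hω₀ : 0 ≤ ω := hω.posSemidef.nonneg
  set X := ω - ν with hX_def
  have hX : IsSelfAdjoint X := (hω.isHermitian.sub hν.isHermitian).isSelfAdjoint
  have hω_eq : ω = ν + X⁺ - X⁻ := by rw [add_sub_assoc, CFC.posPart_sub_negPart X, hX_def]; abel
  have hνC : ν ≤ ν + X⁺ := le_add_of_nonneg_right (CFC.posPart_nonneg X)
  have hωC : ω ≤ ν + X⁺ := hω_eq ▸ sub_le_self _ (CFC.negPart_nonneg X)
  have key := Complex.le_def.mp
    (Matrix.trace_add_trace_sub_trace_le_trace_rpow_mul_rpow hν₀ hω₀ hνC hωC hs) |>.1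
  have htr : ω.trace.re = ν.trace.re + X⁺.trace.re - X⁻.trace.re := by
    conv_lhs => rw [hω_eq]
    rw [Matrix.trace_sub, Matrix.trace_add, Complex.sub_re, Complex.add_re]
  rw [mpow_eq_rpow hν₀, mpow_eq_rpow hω₀, matAbs_eq_abs hX, ← CFC.posPart_add_negPart X]
  simp only [Matrix.trace_add, Complex.add_re, Complex.sub_re] at key ⊢
  linarith
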